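/- arXiv:2108.06691 — 6 statements merged into one kernel-verified Lean document; each statement's English description precedes it below -/
import Mathlib

section
/- Let A ∈ ℂ^{n×n} be Hermitian and let V ∈ ℂ^{n×m} (m ≤ n) be semi-orthogonal, i.e. VᴴV = I_m. Then VᴴAV is Hermitian and for every index 1 ≤ i ≤ m, the i-th largest eigenvalue of VᴴAV is at most the i-th largest eigenvalue of A, i.e. λ_i(VᴴAV) ≤ λ_i(A). -/
/-!
Cauchy interlacing by a dimension count. The columns `1, …, i` of `V * UB` are orthonormal
and diagonalize `A` with entries `λ_1(VᴴAV) ≥ ⋯ ≥ λ_i(VᴴAV)`; the columns `i, …, n` of `UA`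
are orthonormal and diagonalize `A` with entries `λ_i(A) ≥ ⋯ ≥ λ_n(A)`. Their spans have
dimensions `i` and `n - i + 1` in `ℂⁿ`, so they share a nonzero vector `x`, whose Rayleigh
quotient for `A` is at least `λ_i(VᴴAV)` and at most `λ_i(A)`.
-/

open Matrix
open scoped ComplexOrder

namespace Matrix

variable {k l p R : Type*} [Fintype k]

section Semiring

variable [Semiring R] [StarRing R]

lemma conjTranspose_submatrix_mul_submatrix {l' p' : Type*}
    (W : Matrix k l R) (X : Matrix k p R) (f : l' → l) (g : p' → p) :
    (W.submatrix id f)ᴴ * X.submatrix id g = (Wᴴ * X).submatrix f g := by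
  rw [conjTranspose_submatrix, submatrix_mul _ _ f id g Function.bijective_id]

lemma conjTranspose_submatrix_mul_mul_submatrix {l' : Type*}
    (W : Matrix k l R) (A : Matrix k k R) (f : l' → l) :
    (W.submatrix id f)ᴴ * A * W.submatrix id f = (Wᴴ * A * W).submatrix f f := by
  rw [conjTranspose_submatrix, submatrix_mul _ _ f id f Function.bijective_id,
    submatrix_mul _ _ f id id Function.bijective_id, submatrix_id_id]

lemma conjTranspose_mul_mul_eq_of_eq_mul_mul [Fintype l] [DecidableEq l]
    {U : Matrix k l R} {M : Matrix k k R} {D : Matrix l l R}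
    (hU : Uᴴ * U = 1) (h : M = U * D * Uᴴ) : Uᴴ * M * U = D := by
  rw [h, ← Matrix.mul_assoc, ← Matrix.mul_assoc, hU, Matrix.one_mul, Matrix.mul_assoc, hU,
    Matrix.mul_one]

end Semiring

section CommSemiring

variable [CommSemiring R] [StarRing R] [Fintype l]

lemma star_mulVec_dotProduct_mulVec_mulVec (W : Matrix k l R) (A : Matrix k k R) (c : l → R) :
    star (W *ᵥ c) ⬝ᵥ (A *ᵥ (W *ᵥ c)) = star c ⬝ᵥ ((Wᴴ * A * W) *ᵥ c) := by
  rw [star_mulVec, mulVec_mulVec, dotProduct_mulVec, vecMul_vecMul, Matrix.mul_assoc,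
    ← dotProduct_mulVec]

lemma star_mulVec_dotProduct_mulVec_of_conjTranspose_mul_self_eq_one [DecidableEq l]
    {W : Matrix k l R} (hW : Wᴴ * W = 1) (c : l → R) :
    star (W *ᵥ c) ⬝ᵥ (W *ᵥ c) = star c ⬝ᵥ c := by
  rw [star_mulVec, dotProduct_mulVec, vecMul_vecMul, hW, vecMul_one]

lemma star_dotProduct_diagonal_mulVec [DecidableEq l] (d c : l → R) :
    star c ⬝ᵥ (diagonal d *ᵥ c) = ∑ j, d j * (star (c j) * c j) := by
  simp only [dotProduct, mulVec_diagonal, Pi.star_apply]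
  exact Finset.sum_congr rfl fun j _ => by ring

end CommSemiring

section StarOrderedRing

variable [CommRing R] [PartialOrder R] [StarRing R] [StarOrderedRing R] [IsOrderedRing R]
  [Fintype l] [DecidableEq l]

lemma mul_star_dotProduct_self_le_of_le {d : l → R} {a : R} (h : ∀ j, a ≤ d j) (c : l → R) :
    a * (star c ⬝ᵥ c) ≤ star c ⬝ᵥ (diagonal d *ᵥ c) := by
  rw [star_dotProduct_diagonal_mulVec]
  simp only [dotProduct, Pi.star_apply, Finset.mul_sum]
  exact Finset.sum_le_sum fun j _ => mul_le_mul_of_nonneg_right (h j) (star_mul_self_nonneg _)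

lemma star_dotProduct_diagonal_mulVec_le_of_le {d : l → R} {b : R} (h : ∀ j, d j ≤ b)
    (c : l → R) : star c ⬝ᵥ (diagonal d *ᵥ c) ≤ b * (star c ⬝ᵥ c) := by
  rw [star_dotProduct_diagonal_mulVec]
  simp only [dotProduct, Pi.star_apply, Finset.mul_sum]
  exact Finset.sum_le_sum fun j _ => mul_le_mul_of_nonneg_right (h j) (star_mul_self_nonneg _)

end StarOrderedRing

section RCLike

variable {𝕜 : Type*} [RCLike 𝕜] [DecidableEq l] [DecidableEq p]

lemma finrank_range_mulVecLin_of_conjTranspose_mul_self_eq_one [Fintype l] {W : Matrix k l 𝕜}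
    (hW : Wᴴ * W = 1) : Module.finrank 𝕜 (LinearMap.range W.mulVecLin) = Fintype.card l := by
  rw [← rank, ← rank_conjTranspose_mul_self, hW, rank_one]

lemma exists_mulVec_eq_mulVec_ne_zero [Fintype l] [Fintype p]
    {W : Matrix k l 𝕜} {U : Matrix k p 𝕜}
    (hW : Wᴴ * W = 1) (hU : Uᴴ * U = 1)
    (hcard : Fintype.card k < Fintype.card l + Fintype.card p) :
    ∃ c d, W *ᵥ c = U *ᵥ d ∧ W *ᵥ c ≠ 0 := by
  have hmeet : ¬ Disjoint (LinearMap.range W.mulVecLin) (LinearMap.range U.mulVecLin) := by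
    intro h
    have := Submodule.finrank_add_finrank_le_of_disjoint h
    rw [finrank_range_mulVecLin_of_conjTranspose_mul_self_eq_one hW,
      finrank_range_mulVecLin_of_conjTranspose_mul_self_eq_one hU,
      Module.finrank_fintype_fun_eq_card] at this
    omega
  simp only [Submodule.disjoint_def, not_forall] at hmeet
  obtain ⟨_, ⟨c, rfl⟩, ⟨d, hd⟩, hx⟩ := hmeet
  exact ⟨c, d, hd.symm, hx⟩

theorem le_of_card_lt_card_add_card [Fintype l] [Fintype p] {A : Matrix k k 𝕜}
    {W : Matrix k l 𝕜} {U : Matrix k p 𝕜} {μ : l → 𝕜} {ν : p → 𝕜}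
    (hW : Wᴴ * W = 1) (hWA : Wᴴ * A * W = diagonal μ)
    (hU : Uᴴ * U = 1) (hUA : Uᴴ * A * U = diagonal ν)
    (hcard : Fintype.card k < Fintype.card l + Fintype.card p)
    {a b : 𝕜} (ha : ∀ j, a ≤ μ j) (hb : ∀ j, ν j ≤ b) : a ≤ b := by
  obtain ⟨c, d, hcd, hx⟩ := exists_mulVec_eq_mulVec_ne_zero hW hU hcard
  have hnorm_c : star (W *ᵥ c) ⬝ᵥ (W *ᵥ c) = star c ⬝ᵥ c :=
    star_mulVec_dotProduct_mulVec_of_conjTranspose_mul_self_eq_one hW c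
  have hnorm_d : star (W *ᵥ c) ⬝ᵥ (W *ᵥ c) = star d ⬝ᵥ d :=
    hcd ▸ star_mulVec_dotProduct_mulVec_of_conjTranspose_mul_self_eq_one hU d
  have hquad : star c ⬝ᵥ (diagonal μ *ᵥ c) = star d ⬝ᵥ (diagonal ν *ᵥ d) := by
    rw [← hWA, ← hUA, ← star_mulVec_dotProduct_mulVec_mulVec,
      ← star_mulVec_dotProduct_mulVec_mulVec, hcd]
  refine le_of_mul_le_mul_right ?_ (dotProduct_star_self_pos_iff.mpr hx)
  calc a * (star (W *ᵥ c) ⬝ᵥ (W *ᵥ c)) = a * (star c ⬝ᵥ c) := by rw [hnorm_c]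
    _ ≤ star c ⬝ᵥ (diagonal μ *ᵥ c) := mul_star_dotProduct_self_le_of_le ha c
    _ = star d ⬝ᵥ (diagonal ν *ᵥ d) := hquad
    _ ≤ b * (star d ⬝ᵥ d) := star_dotProduct_diagonal_mulVec_le_of_le hb d
    _ = b * (star (W *ᵥ c) ⬝ᵥ (W *ᵥ c)) := by rw [hnorm_d]

theorem le_of_card_lt_card_add_card_of_finset {A : Matrix k k 𝕜}
    {W : Matrix k l 𝕜} {U : Matrix k p 𝕜} {μ : l → 𝕜} {ν : p → 𝕜}
    (hW : Wᴴ * W = 1) (hWA : Wᴴ * A * W = diagonal μ)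
    (hU : Uᴴ * U = 1) (hUA : Uᴴ * A * U = diagonal ν) {s : Finset l} {t : Finset p}
    (hcard : Fintype.card k < s.card + t.card)
    {a b : 𝕜} (ha : ∀ j ∈ s, a ≤ μ j) (hb : ∀ j ∈ t, ν j ≤ b) : a ≤ b := by
  refine le_of_card_lt_card_add_card (A := A) (W := W.submatrix id ((↑) : s → l))
    (U := U.submatrix id ((↑) : t → p)) (μ := μ ∘ (↑)) (ν := ν ∘ (↑)) ?_ ?_ ?_ ?_
    (by simpa using hcard) (fun j => ha j j.2) (fun j => hb j j.2)
  · rw [conjTranspose_submatrix_mul_submatrix, hW, submatrix_one _ Subtype.val_injective]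
  · rw [conjTranspose_submatrix_mul_mul_submatrix, hWA,
      submatrix_diagonal _ _ Subtype.val_injective]
  · rw [conjTranspose_submatrix_mul_submatrix, hU, submatrix_one _ Subtype.val_injective]
  · rw [conjTranspose_submatrix_mul_mul_submatrix, hUA,
      submatrix_diagonal _ _ Subtype.val_injective]

end RCLike

end Matrix

/-- Let `A ∈ ℂ^{n×n}` be Hermitian and `V ∈ ℂ^{n×m}` (`m ≤ n`) semi-orthogonal
(`Vᴴ V = I`). Then `Vᴴ A V` is Hermitian, and its eigenvalues (listed decreasingly) are
dominated indexwise by those of `A`: `λ_i(VᴴAV) ≤ λ_i(A)` for `1 ≤ i ≤ m`.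
The decreasing eigenvalue sequences are pinned down by a unitary spectral decomposition
together with antitonicity. -/
theorem stmt_0 {n m : ℕ} (hmn : m ≤ n)
    (A : Matrix (Fin n) (Fin n) ℂ) (hA : A.IsHermitian)
    (V : Matrix (Fin n) (Fin m) ℂ) (hV : Vᴴ * V = 1)
    (μA : Fin n → ℝ) (hμA : Antitone μA)
    (UA : Matrix (Fin n) (Fin n) ℂ) (hUA : UAᴴ * UA = 1)
    (hdecA : A = UA * Matrix.diagonal (fun i => (μA i : ℂ)) * UAᴴ)
    (μB : Fin m → ℝ) (hμB : Antitone μB)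
    (UB : Matrix (Fin m) (Fin m) ℂ) (hUB : UBᴴ * UB = 1)
    (hdecB : Vᴴ * A * V = UB * Matrix.diagonal (fun i => (μB i : ℂ)) * UBᴴ) :
    (Vᴴ * A * V).IsHermitian ∧ ∀ i : Fin m, μB i ≤ μA (Fin.castLE hmn i) := by
  refine ⟨isHermitian_conjTranspose_mul_mul V hA, fun i => ?_⟩
  have hW : (V * UB)ᴴ * (V * UB) = 1 := by
    rw [conjTranspose_mul, Matrix.mul_assoc, ← Matrix.mul_assoc Vᴴ, hV, Matrix.one_mul, hUB]
  have hWA : (V * UB)ᴴ * A * (V * UB) = diagonal fun j => (μB j : ℂ) := by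
    rw [← conjTranspose_mul_mul_eq_of_eq_mul_mul hUB hdecB]
    simp only [conjTranspose_mul, Matrix.mul_assoc]
  have hcard :
      Fintype.card (Fin n) < (Finset.Iic i).card + (Finset.Ici (Fin.castLE hmn i)).card := by
    simp only [Fintype.card_fin, Fin.card_Iic, Fin.card_Ici, Fin.val_castLE]
    omega
  refine Complex.real_le_real.mp <| le_of_card_lt_card_add_card_of_finset hW hWA hUA
    (conjTranspose_mul_mul_eq_of_eq_mul_mul hUA hdecA) hcard (fun j hj => ?_) (fun j hj => ?_)
  · exact Complex.real_le_real.mpr (hμB (Finset.mem_Iic.mp hj))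
  · exact Complex.real_le_real.mpr (hμA (Finset.mem_Ici.mp hj))
end

section
/- Let A ∈ ℂ^{n×n} be Hermitian and let B ∈ ℂ^{m×m} (m ≤ n) be its leading m×m principal submatrix, i.e. B(i,j) = A(i,j) for 1 ≤ i,j ≤ m. Then B is Hermitian and for every 1 ≤ i ≤ m, λ_i(B) ≤ λ_i(A), where eigenvalues are listed in decreasing order. -/
open Matrix


namespace Stmt1Aux

/-- Embedding matrix associated to `f : Fin a → Fin b`. -/
noncomputable def embMat {a b : ℕ} (f : Fin a → Fin b) : Matrix (Fin b) (Fin a) ℂ :=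
  fun k j => if k = f j then 1 else 0

lemma embMat_conjT_mul_emb {a b : ℕ} (f : Fin a → Fin b) (hf : Function.Injective f) :
    (embMat f)ᴴ * embMat f = 1 := by
  ext j j'
  simp only [Matrix.mul_apply, conjTranspose_apply, embMat, Matrix.one_apply]
  simp only [apply_ite star, star_one, star_zero, ite_mul, one_mul, zero_mul]
  rw [Finset.sum_ite_eq' (Finset.univ) (f j) (fun k => if k = f j' then (1:ℂ) else 0)]
  simp [hf.eq_iff, eq_comm]

lemma embMat_compress {a b : ℕ} (f : Fin a → Fin b) (M : Matrix (Fin b) (Fin b) ℂ) :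
    (embMat f)ᴴ * M * embMat f = M.submatrix f f := by
  ext i j
  simp only [Matrix.mul_apply, conjTranspose_apply, embMat, submatrix_apply]
  simp only [apply_ite star, star_one, star_zero, ite_mul, one_mul, zero_mul]
  have : ∀ l, (∑ k, if k = f i then M k l else 0) = M (f i) l := by
    intro l
    rw [Finset.sum_ite_eq' (Finset.univ) (f i) (fun k => M k l)]
    simp
  simp only [this]
  have : ∀ k, (if k = f j then M (f i) k else 0) = (fun k => if k = f j then M (f i) k else 0) k := fun _ => rfl
  calc (∑ l, M (f i) l * if l = f j then (1:ℂ) else 0)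
      = ∑ l, (if l = f j then M (f i) l else 0) := by
        apply Finset.sum_congr rfl; intro l _
        by_cases h : l = f j <;> simp [h]
    _ = M (f i) (f j) := by
        rw [Finset.sum_ite_eq' (Finset.univ) (f j) (fun l => M (f i) l)]; simp

lemma embMat_mulVec_eq_zero {a b : ℕ} (f : Fin a → Fin b) (v : Fin a → ℂ) (j : Fin b)
    (h : ∀ k, f k ≠ j) : (embMat f *ᵥ v) j = 0 := by
  simp only [Matrix.mulVec, dotProduct, embMat]
  apply Finset.sum_eq_zero
  intro k _
  simp [Ne.symm (h k)]

lemma unit_mul_unit {a b c : ℕ} (X : Matrix (Fin c) (Fin b) ℂ) (Y : Matrix (Fin b) (Fin a) ℂ)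
    (hX : Xᴴ * X = 1) (hY : Yᴴ * Y = 1) : (X * Y)ᴴ * (X * Y) = 1 := by
  rw [conjTranspose_mul]
  calc Yᴴ * Xᴴ * (X * Y) = Yᴴ * (Xᴴ * X) * Y := by
        rw [Matrix.mul_assoc, Matrix.mul_assoc, Matrix.mul_assoc]
    _ = Yᴴ * Y := by rw [hX, Matrix.mul_one]
    _ = 1 := hY

lemma inj_of_unit {a b : ℕ} (M : Matrix (Fin b) (Fin a) ℂ) (h : Mᴴ * M = 1) :
    Function.Injective M.mulVecLin := by
  intro x y hxy
  simp only [mulVecLin_apply] at hxy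
  have : Mᴴ *ᵥ (M *ᵥ x) = Mᴴ *ᵥ (M *ᵥ y) := by rw [hxy]
  rwa [mulVec_mulVec, mulVec_mulVec, h, one_mulVec, one_mulVec] at this

lemma norm_eq {a b : ℕ} (M : Matrix (Fin b) (Fin a) ℂ) (h : Mᴴ * M = 1) (v : Fin a → ℂ) :
    star (M *ᵥ v) ⬝ᵥ (M *ᵥ v) = star v ⬝ᵥ v := by
  rw [star_mulVec, dotProduct_mulVec, vecMul_vecMul, h, vecMul_one]

lemma dot_self {a : ℕ} (v : Fin a → ℂ) :
    star v ⬝ᵥ v = ((∑ j, Complex.normSq (v j) : ℝ) : ℂ) := by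
  simp only [dotProduct, Pi.star_apply]
  push_cast
  apply Finset.sum_congr rfl
  intro j _
  rw [mul_comm, show star (v j) = (starRingEnd ℂ) (v j) from rfl, Complex.mul_conj]

lemma quad_eq {k : ℕ} (U : Matrix (Fin k) (Fin k) ℂ) (hU : Uᴴ * U = 1)
    (μ : Fin k → ℝ) (c : Fin k → ℂ) :
    star (U *ᵥ c) ⬝ᵥ ((U * Matrix.diagonal (fun i => (μ i : ℂ)) * Uᴴ) *ᵥ (U *ᵥ c))
      = ((∑ j, μ j * Complex.normSq (c j) : ℝ) : ℂ) := by
  have h2 : (U * Matrix.diagonal (fun i => (μ i : ℂ)) * Uᴴ) *ᵥ (U *ᵥ c)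
      = U *ᵥ (Matrix.diagonal (fun i => (μ i : ℂ)) *ᵥ c) := by
    rw [mulVec_mulVec, mulVec_mulVec, Matrix.mul_assoc, hU, Matrix.mul_one]
  rw [h2, star_mulVec, dotProduct_mulVec, vecMul_vecMul, hU, vecMul_one]
  simp only [dotProduct, Pi.star_apply, mulVec_diagonal]
  push_cast
  apply Finset.sum_congr rfl
  intro j _
  rw [show star (c j) * ((μ j : ℂ) * c j) = (μ j : ℂ) * (c j * (starRingEnd ℂ) (c j)) by
      simp only [Complex.star_def]; ring,
    Complex.mul_conj]

lemma compress_quad {a b : ℕ} (M : Matrix (Fin b) (Fin b) ℂ) (P : Matrix (Fin b) (Fin a) ℂ)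
    (y : Fin a → ℂ) :
    star (P *ᵥ y) ⬝ᵥ (M *ᵥ (P *ᵥ y)) = star y ⬝ᵥ ((Pᴴ * M * P) *ᵥ y) := by
  rw [star_mulVec, dotProduct_mulVec, vecMul_vecMul, dotProduct_mulVec, vecMul_vecMul,
    dotProduct_mulVec]

end Stmt1Aux

open Stmt1Aux

/-- Let `A ∈ ℂ^{n×n}` be Hermitian and let `B ∈ ℂ^{m×m}` (`m ≤ n`) be its leading
`m×m` principal submatrix, `B i j = A i j` for `i, j < m`. Then `B` is Hermitian and
`λ_i(B) ≤ λ_i(A)` for every `1 ≤ i ≤ m`, with eigenvalues listed in decreasing order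
(pinned down by a unitary spectral decomposition together with antitonicity). -/
theorem stmt_1 {n m : ℕ} (hmn : m ≤ n)
    (A : Matrix (Fin n) (Fin n) ℂ) (hA : A.IsHermitian)
    (B : Matrix (Fin m) (Fin m) ℂ)
    (hB : ∀ i j : Fin m, B i j = A (Fin.castLE hmn i) (Fin.castLE hmn j))
    (μA : Fin n → ℝ) (hμA : Antitone μA)
    (UA : Matrix (Fin n) (Fin n) ℂ) (hUA : UAᴴ * UA = 1)
    (hdecA : A = UA * Matrix.diagonal (fun i => (μA i : ℂ)) * UAᴴ)
    (μB : Fin m → ℝ) (hμB : Antitone μB)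
    (UB : Matrix (Fin m) (Fin m) ℂ) (hUB : UBᴴ * UB = 1)
    (hdecB : B = UB * Matrix.diagonal (fun i => (μB i : ℂ)) * UBᴴ) :
    B.IsHermitian ∧ ∀ i : Fin m, μB i ≤ μA (Fin.castLE hmn i) := by
  have hBsub : B = A.submatrix (Fin.castLE hmn) (Fin.castLE hmn) := by
    ext i j; exact hB i j
  constructor
  · rw [hBsub]; exact hA.submatrix _
  intro i
  -- P : embedding ℂ^m → ℂ^n
  set P : Matrix (Fin n) (Fin m) ℂ := embMat (Fin.castLE hmn) with hP
  have hPunit : Pᴴ * P = 1 := embMat_conjT_mul_emb _ (Fin.castLE_injective hmn)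
  have hPAP : Pᴴ * A * P = B := by rw [hP, embMat_compress, hBsub]
  -- the two coordinate embeddings
  have hi1m : i.val + 1 ≤ m := i.isLt
  set g1 : Fin (i.val + 1) → Fin m := Fin.castLE hi1m with hg1
  have hg1inj : Function.Injective g1 := Fin.castLE_injective _
  set g2 : Fin (n - i.val) → Fin n :=
    fun k => ⟨i.val + k.val, by have := k.isLt; have := i.isLt; omega⟩ with hg2
  have hg2inj : Function.Injective g2 := by
    intro a b hab
    have : i.val + a.val = i.val + b.val := congrArg Fin.val hab
    exact Fin.ext (by omega)
  -- the two matrices whose ranges we intersect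
  set M1 : Matrix (Fin n) (Fin (i.val + 1)) ℂ := P * UB * embMat g1 with hM1
  set M2 : Matrix (Fin n) (Fin (n - i.val)) ℂ := UA * embMat g2 with hM2
  have hM1unit : M1ᴴ * M1 = 1 := by
    rw [hM1, Matrix.mul_assoc]
    exact unit_mul_unit _ _ hPunit (unit_mul_unit _ _ hUB (embMat_conjT_mul_emb _ hg1inj))
  have hM2unit : M2ᴴ * M2 = 1 :=
    unit_mul_unit _ _ hUA (embMat_conjT_mul_emb _ hg2inj)
  set S := LinearMap.range M1.mulVecLin with hS
  set T := LinearMap.range M2.mulVecLin with hT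
  have hdimS : Module.finrank ℂ S = i.val + 1 := by
    rw [hS, LinearMap.finrank_range_of_inj (inj_of_unit _ hM1unit)]
    simp [Module.finrank_fin_fun]
  have hdimT : Module.finrank ℂ T = n - i.val := by
    rw [hT, LinearMap.finrank_range_of_inj (inj_of_unit _ hM2unit)]
    simp [Module.finrank_fin_fun]
  have hinf : S ⊓ T ≠ ⊥ := by
    intro hbot
    have h1 := Submodule.finrank_sup_add_finrank_inf_eq S T
    have h2 : Module.finrank ℂ ↥(S ⊔ T) ≤ n := by
      have := Submodule.finrank_le (S ⊔ T)
      simpa [Module.finrank_fin_fun] using this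
    rw [hbot, hdimS, hdimT] at h1
    simp [finrank_bot] at h1
    have := i.isLt
    omega
  obtain ⟨x, hxmem, hxne⟩ := Submodule.exists_mem_ne_zero_of_ne_bot hinf
  obtain ⟨hxS, hxT⟩ := Submodule.mem_inf.mp hxmem
  obtain ⟨a, ha⟩ := hxS
  obtain ⟨b, hb⟩ := hxT
  simp only [mulVecLin_apply] at ha hb
  set d : Fin m → ℂ := embMat g1 *ᵥ a with hd
  set c : Fin n → ℂ := embMat g2 *ᵥ b with hc
  have hxc : x = UA *ᵥ c := by rw [hc, ← hb, hM2, ← mulVec_mulVec]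
  have hxd : x = P *ᵥ (UB *ᵥ d) := by
    rw [hd, ← ha, hM1, ← mulVec_mulVec, ← mulVec_mulVec]
  -- quadratic form computed two ways
  have hQA : star x ⬝ᵥ (A *ᵥ x) = ((∑ j, μA j * Complex.normSq (c j) : ℝ) : ℂ) := by
    rw [hxc, hdecA]; exact quad_eq UA hUA μA c
  have hQB : star x ⬝ᵥ (A *ᵥ x) = ((∑ j, μB j * Complex.normSq (d j) : ℝ) : ℂ) := by
    rw [hxd, compress_quad, hPAP, hdecB]
    exact quad_eq UB hUB μB d
  have hQ : (∑ j, μB j * Complex.normSq (d j)) = ∑ j, μA j * Complex.normSq (c j) := by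
    have := hQB.symm.trans hQA
    exact_mod_cast this
  -- norms computed two ways
  have hNc : star x ⬝ᵥ x = ((∑ j, Complex.normSq (c j) : ℝ) : ℂ) := by
    rw [hxc, norm_eq UA hUA, dot_self]
  have hNd : star x ⬝ᵥ x = ((∑ j, Complex.normSq (d j) : ℝ) : ℂ) := by
    rw [hxd, mulVec_mulVec, norm_eq _ (unit_mul_unit _ _ hPunit hUB), dot_self]
  have hN : (∑ j, Complex.normSq (d j)) = ∑ j, Complex.normSq (c j) := by
    have := hNd.symm.trans hNc
    exact_mod_cast this
  set N : ℝ := ∑ j, Complex.normSq (c j) with hNdef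
  -- N > 0
  have hNpos : 0 < N := by
    rcases eq_or_lt_of_le (Finset.sum_nonneg (fun j _ => Complex.normSq_nonneg (c j))) with h | h
    · exfalso
      have hc0 : ∀ j, c j = 0 := by
        intro j
        have := (Finset.sum_eq_zero_iff_of_nonneg
          (fun j (_ : j ∈ Finset.univ) => Complex.normSq_nonneg (c j))).mp h.symm j (Finset.mem_univ j)
        exact Complex.normSq_eq_zero.mp this
      apply hxne
      rw [hxc, show c = 0 from funext hc0, mulVec_zero]
    · exact h
  -- vanishing properties
  have hcvan : ∀ j : Fin n, j.val < i.val → c j = 0 := by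
    intro j hj
    apply embMat_mulVec_eq_zero
    intro k hk
    have : (g2 k).val = j.val := congrArg Fin.val hk
    simp only [hg2] at this
    omega
  have hdvan : ∀ j : Fin m, i.val < j.val → d j = 0 := by
    intro j hj
    apply embMat_mulVec_eq_zero
    intro k hk
    have h1 : (g1 k).val = j.val := congrArg Fin.val hk
    have h2 : k.val < i.val + 1 := k.isLt
    simp only [hg1, Fin.coe_castLE] at h1
    omega
  -- inequalities
  have hineq1 : μB i * N ≤ ∑ j, μB j * Complex.normSq (d j) := by
    rw [← hN, Finset.mul_sum]
    apply Finset.sum_le_sum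
    intro j _
    by_cases hdj : d j = 0
    · simp [hdj]
    · have hle : j ≤ i := by
        by_contra hcon
        exact hdj (hdvan j (by
          simp only [not_le, Fin.lt_def] at hcon
          omega))
      exact mul_le_mul_of_nonneg_right (hμB hle) (Complex.normSq_nonneg _)
  have hineq2 : (∑ j, μA j * Complex.normSq (c j)) ≤ μA (Fin.castLE hmn i) * N := by
    rw [hNdef, Finset.mul_sum]
    apply Finset.sum_le_sum
    intro j _
    by_cases hcj : c j = 0
    · simp [hcj]
    · have hle : Fin.castLE hmn i ≤ j := by
        by_contra hcon
        exact hcj (hcvan j (by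
          simp only [not_le, Fin.lt_def, Fin.coe_castLE] at hcon
          omega))
      exact mul_le_mul_of_nonneg_right (hμA hle) (Complex.normSq_nonneg _)
  have : μB i * N ≤ μA (Fin.castLE hmn i) * N := le_trans hineq1 (hQ ▸ hineq2)
  exact le_of_mul_le_mul_right (by simpa [mul_comm] using this) hNpos
end

section
/- Let H_e ∈ ℂ^{n×n} be Hermitian positive semidefinite with eigenvalues λ_1 ≥ ⋯ ≥ λ_n, let c ≥ 0 be real, and let V ∈ ℂ^{n×m} (m ≤ n) satisfy VᴴV = I_m. Then log₂ det(I_m + c·VᴴH_eV) ≤ Σ_{i=1}^{m} log₂(1 + c·λ_i). -/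
open Matrix ComplexOrder


lemma aux_exists_ker {ι κ : Type*} [Fintype ι] [Fintype κ] [DecidableEq κ]
    (h : Fintype.card ι < Fintype.card κ) (K : Matrix ι κ ℂ) :
    ∃ z : κ → ℂ, z ≠ 0 ∧ K.mulVec z = 0 := by
  have hni : ¬ Function.Injective K.mulVecLin := by
    intro hinj
    have := LinearMap.finrank_le_finrank_of_injective hinj
    simp [Module.finrank_pi] at this
    omega
  rw [Function.not_injective_iff] at hni
  obtain ⟨a, b, hab, hne⟩ := hni
  exact ⟨a - b, sub_ne_zero_of_ne hne, by
    have : K.mulVecLin (a - b) = 0 := by rw [map_sub, hab, sub_self]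
    simpa using this⟩

lemma aux_rayleigh {k : ℕ} (U : Matrix (Fin k) (Fin k) ℂ) (μ : Fin k → ℝ) (x : Fin k → ℂ) :
    star x ⬝ᵥ (U * Matrix.diagonal (fun i => (μ i : ℂ)) * Uᴴ) *ᵥ x
      = ((∑ i, μ i * Complex.normSq ((Uᴴ *ᵥ x) i) : ℝ) : ℂ) := by
  set w := Uᴴ *ᵥ x with hw
  have h1 : (U * Matrix.diagonal (fun i => (μ i : ℂ)) * Uᴴ) *ᵥ x
      = U *ᵥ (Matrix.diagonal (fun i => (μ i : ℂ)) *ᵥ w) := by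
    rw [← mulVec_mulVec, ← mulVec_mulVec]
  rw [h1, dotProduct_mulVec]
  have h2 : star x ᵥ* U = star w := by
    rw [hw, star_mulVec, conjTranspose_conjTranspose]
  rw [h2]
  simp only [dotProduct, mulVec_diagonal, Complex.ofReal_sum]
  refine Finset.sum_congr rfl fun i _ => ?_
  have h3 : star w i = (starRingEnd ℂ) (w i) := rfl
  rw [h3, Complex.ofReal_mul, Complex.normSq_eq_conj_mul_self]
  ring

lemma aux_norm {k : ℕ} (v : Fin k → ℂ) :
    star v ⬝ᵥ v = ((∑ i, Complex.normSq (v i) : ℝ) : ℂ) := by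
  simp only [dotProduct, Pi.star_apply, Complex.ofReal_sum]
  refine Finset.sum_congr rfl fun i _ => ?_
  have h3 : star (v i) = (starRingEnd ℂ) (v i) := rfl
  rw [Complex.normSq_eq_conj_mul_self, h3]



lemma aux_conj {n m : ℕ} (A : Matrix (Fin n) (Fin n) ℂ) (V : Matrix (Fin n) (Fin m) ℂ)
    (y : Fin m → ℂ) :
    star (V *ᵥ y) ⬝ᵥ A *ᵥ (V *ᵥ y) = star y ⬝ᵥ (Vᴴ * A * V) *ᵥ y := by
  rw [star_mulVec, dotProduct_mulVec, dotProduct_mulVec, vecMul_vecMul, vecMul_vecMul,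
    ← dotProduct_mulVec, Matrix.mul_assoc]

lemma aux_semi {a b : ℕ} (W : Matrix (Fin a) (Fin b) ℂ) (hW : Wᴴ * W = 1) (v : Fin b → ℂ) :
    star (W *ᵥ v) ⬝ᵥ (W *ᵥ v) = star v ⬝ᵥ v := by
  rw [star_mulVec, dotProduct_mulVec, vecMul_vecMul, hW, vecMul_one]

lemma aux_interlacing {n m : ℕ} (hmn : m ≤ n)
    (A : Matrix (Fin n) (Fin n) ℂ)
    (μ : Fin n → ℝ) (hμ : Antitone μ)
    (U : Matrix (Fin n) (Fin n) ℂ) (hU : Uᴴ * U = 1)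
    (hA : A = U * Matrix.diagonal (fun i => (μ i : ℂ)) * Uᴴ)
    (V : Matrix (Fin n) (Fin m) ℂ) (hV : Vᴴ * V = 1)
    (ν : Fin m → ℝ) (hν : Antitone ν)
    (Q : Matrix (Fin m) (Fin m) ℂ) (hQ : Qᴴ * Q = 1)
    (hB : Vᴴ * A * V = Q * Matrix.diagonal (fun i => (ν i : ℂ)) * Qᴴ)
    (j : Fin m) : ν j ≤ μ (Fin.castLE hmn j) := by
  have hjm : (j : ℕ) < m := j.isLt
  have hjn : (j : ℕ) ≤ n := by omega
  -- kernel vector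
  set em : Fin (m - ((j : ℕ) + 1)) → Fin m := fun r => ⟨(j : ℕ) + 1 + r.val, by omega⟩ with hem
  set K : Matrix (Fin (j : ℕ) ⊕ Fin (m - ((j : ℕ) + 1))) (Fin m) ℂ :=
    Matrix.of (Sum.elim
      (fun i k => (Uᴴ * V * Q) (Fin.castLE hjn i) k)
      (fun r k => if k = em r then 1 else 0)) with hK
  obtain ⟨z, hz, hz0⟩ := aux_exists_ker (by simp; omega) K
  have hsupp : ∀ k : Fin m, (j : ℕ) < (k : ℕ) → z k = 0 := by
    intro k hk
    have h1 := congrFun hz0 (Sum.inr ⟨(k : ℕ) - ((j : ℕ) + 1), by omega⟩)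
    have h2 : em ⟨(k : ℕ) - ((j : ℕ) + 1), by omega⟩ = k := by
      simp only [hem]; ext; simp; omega
    simpa [hK, Matrix.mulVec, dotProduct, ite_mul, h2] using h1
  have hrow : ∀ i : Fin n, (i : ℕ) < (j : ℕ) → ((Uᴴ * V * Q) *ᵥ z) i = 0 := by
    intro i hi
    have h1 := congrFun hz0 (Sum.inl ⟨(i : ℕ), hi⟩)
    have h2 : (Fin.castLE hjn ⟨(i : ℕ), hi⟩) = i := by ext; simp
    simpa [hK, Matrix.mulVec, dotProduct, h2] using h1
  set y : Fin m → ℂ := Q *ᵥ z with hy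
  set x : Fin n → ℂ := V *ᵥ y with hx
  set w : Fin n → ℂ := Uᴴ *ᵥ x with hwdef
  have hQy : Qᴴ *ᵥ y = z := by rw [hy, mulVec_mulVec, hQ, one_mulVec]
  have hUx : w = (Uᴴ * V * Q) *ᵥ z := by
    rw [hwdef, hx, hy, mulVec_mulVec, mulVec_mulVec, Matrix.mul_assoc]
  -- the two Rayleigh quotients agree
  have hE : star y ⬝ᵥ (Vᴴ * A * V) *ᵥ y = star x ⬝ᵥ A *ᵥ x := by
    rw [hx]; exact (aux_conj A V y).symm
  have hL : star y ⬝ᵥ (Vᴴ * A * V) *ᵥ y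
      = ((∑ k, ν k * Complex.normSq (z k) : ℝ) : ℂ) := by
    rw [hB, aux_rayleigh, hQy]
  have hR : star x ⬝ᵥ A *ᵥ x
      = ((∑ i, μ i * Complex.normSq (w i) : ℝ) : ℂ) := by
    rw [hA, aux_rayleigh]
  have hEreal : ∑ k, ν k * Complex.normSq (z k) = ∑ i, μ i * Complex.normSq (w i) := by
    have := hL.symm.trans (hE.trans hR)
    exact_mod_cast this
  -- norms agree
  have hNyx : star x ⬝ᵥ x = star y ⬝ᵥ y := by rw [hx]; exact aux_semi V hV y
  have hNz : star z ⬝ᵥ z = star y ⬝ᵥ y := by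
    rw [← hQy]; exact aux_semi Qᴴ (by rw [conjTranspose_conjTranspose, mul_eq_one_comm.mp hQ]) y
  have hNw : star w ⬝ᵥ w = star x ⬝ᵥ x := by
    rw [hwdef]; exact aux_semi Uᴴ (by rw [conjTranspose_conjTranspose, mul_eq_one_comm.mp hU]) x
  have hNzw : ∑ k, Complex.normSq (z k) = ∑ i, Complex.normSq (w i) := by
    have : ((∑ k, Complex.normSq (z k) : ℝ) : ℂ) = ((∑ i, Complex.normSq (w i) : ℝ) : ℂ) := by
      rw [← aux_norm, ← aux_norm, hNz, hNw, hNyx]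
    exact_mod_cast this
  set N : ℝ := ∑ k, Complex.normSq (z k) with hNdef
  have hNpos : 0 < N := by
    obtain ⟨k, hk⟩ := Function.ne_iff.mp hz
    exact Finset.sum_pos' (fun i _ => Complex.normSq_nonneg _)
      ⟨k, Finset.mem_univ k, by simpa [Complex.normSq_pos] using hk⟩
  have hlow : ν j * N ≤ ∑ k, ν k * Complex.normSq (z k) := by
    rw [hNdef, Finset.mul_sum]
    refine Finset.sum_le_sum fun k _ => ?_
    rcases lt_or_ge (j : ℕ) (k : ℕ) with h | h
    · rw [hsupp k h]; simp
    · exact mul_le_mul_of_nonneg_right (hν (Fin.le_def.mpr h)) (Complex.normSq_nonneg _)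
  have hhigh : ∑ i, μ i * Complex.normSq (w i) ≤ μ (Fin.castLE hmn j) * N := by
    rw [hNzw, Finset.mul_sum]
    refine Finset.sum_le_sum fun i _ => ?_
    rcases lt_or_ge (i : ℕ) (j : ℕ) with h | h
    · rw [hUx, hrow i h]; simp
    · refine mul_le_mul_of_nonneg_right (hμ ?_) (Complex.normSq_nonneg _)
      rw [Fin.le_def]; simpa using h
  have : ν j * N ≤ μ (Fin.castLE hmn j) * N := by
    calc ν j * N ≤ ∑ k, ν k * Complex.normSq (z k) := hlow
    _ = ∑ i, μ i * Complex.normSq (w i) := hEreal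
    _ ≤ μ (Fin.castLE hmn j) * N := hhigh
  exact le_of_mul_le_mul_right this hNpos



lemma aux_perm {m : ℕ} (Q0 : Matrix (Fin m) (Fin m) ℂ) (d : Fin m → ℂ) (ρ : Equiv.Perm (Fin m)) :
    (Q0.submatrix id ρ) * Matrix.diagonal (d ∘ ρ) * (Q0.submatrix id ρ)ᴴ
      = Q0 * Matrix.diagonal d * Q0ᴴ := by
  ext a b
  simp only [Matrix.mul_apply, Matrix.diagonal_apply, Matrix.submatrix_apply,
    Matrix.conjTranspose_apply, id_eq, Function.comp_apply, ite_mul, zero_mul, mul_ite,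
    mul_zero, Finset.sum_ite_eq, Finset.sum_ite_eq', Finset.mem_univ, if_true]
  exact Equiv.sum_comp ρ (fun k => Q0 a k * d k * star (Q0 b k))

lemma aux_permU {m : ℕ} (Q0 : Matrix (Fin m) (Fin m) ℂ) (h : Q0ᴴ * Q0 = 1)
    (ρ : Equiv.Perm (Fin m)) :
    (Q0.submatrix id ρ)ᴴ * (Q0.submatrix id ρ) = 1 := by
  have h2 : (Q0.submatrix id ρ)ᴴ * (Q0.submatrix id ρ) = (Q0ᴴ * Q0).submatrix ρ ρ := by
    ext a b; simp [Matrix.mul_apply]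
  rw [h2, h, Matrix.submatrix_one_equiv]



/-- Let `H_e ∈ ℂ^{n×n}` be Hermitian positive semidefinite with eigenvalues
`λ_1 ≥ … ≥ λ_n` (pinned down by a unitary spectral decomposition together with antitonicity),
let `c ≥ 0`, and let `V ∈ ℂ^{n×m}` (`m ≤ n`) satisfy `Vᴴ V = I`. Then
`log₂ det(I + c VᴴH_eV) ≤ ∑_{i=1}^m log₂ (1 + c λ_i)`. -/
theorem stmt_3 {n m : ℕ} (hmn : m ≤ n)
    (He : Matrix (Fin n) (Fin n) ℂ) (hHe : He.PosSemidef)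
    (μ : Fin n → ℝ) (hμ : Antitone μ)
    (U : Matrix (Fin n) (Fin n) ℂ) (hU : Uᴴ * U = 1)
    (hdec : He = U * Matrix.diagonal (fun i => (μ i : ℂ)) * Uᴴ)
    (c : ℝ) (hc : 0 ≤ c)
    (V : Matrix (Fin n) (Fin m) ℂ) (hV : Vᴴ * V = 1) :
    Real.logb 2 ((1 + (c : ℂ) • (Vᴴ * He * V)).det).re
      ≤ ∑ i : Fin m, Real.logb 2 (1 + c * μ (Fin.castLE hmn i)) := by
  have hMps : (Vᴴ * He * V).PosSemidef := hHe.conjTranspose_mul_mul_same V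
  have hM : (Vᴴ * He * V).IsHermitian := hMps.1
  set ev : Fin m → ℝ := hM.eigenvalues with hev
  set ρ : Equiv.Perm (Fin m) := Fin.revPerm.trans (Tuple.sort ev) with hρ
  set ν : Fin m → ℝ := fun i => ev (ρ i) with hνdef
  have hν : Antitone ν := fun i i' h =>
    Tuple.monotone_sort ev (Fin.rev_le_rev.mpr h)
  have hνnn : ∀ k, 0 ≤ ν k := fun k => hMps.eigenvalues_nonneg _
  set Q0 : Matrix (Fin m) (Fin m) ℂ := (hM.eigenvectorUnitary : Matrix (Fin m) (Fin m) ℂ)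
    with hQ0def
  have hQ0 : Q0ᴴ * Q0 = 1 := by
    rw [← Matrix.star_eq_conjTranspose]
    exact mem_unitaryGroup_iff'.mp hM.eigenvectorUnitary.2
  set Q : Matrix (Fin m) (Fin m) ℂ := Q0.submatrix id ρ with hQdef
  have hQunit : Qᴴ * Q = 1 := aux_permU Q0 hQ0 ρ
  have hQspec : Vᴴ * He * V = Q * Matrix.diagonal (fun k => (ν k : ℂ)) * Qᴴ := by
    have h1 : (fun k => ((ν k : ℝ) : ℂ)) = (RCLike.ofReal ∘ ev) ∘ ρ := by
      funext k; simp [hνdef]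
    rw [h1, hQdef, aux_perm Q0 (RCLike.ofReal ∘ ev) ρ]
    have := hM.spectral_theorem
    rwa [← Matrix.star_eq_conjTranspose]
  have hQQ : Q * Qᴴ = 1 := mul_eq_one_comm.mp hQunit
  have hdet : (1 + (c : ℂ) • (Vᴴ * He * V)).det = ((∏ k, (1 + c * ν k) : ℝ) : ℂ) := by
    have h1 : (1 : Matrix (Fin m) (Fin m) ℂ) + (c : ℂ) • (Vᴴ * He * V)
        = Q * Matrix.diagonal (fun k => (1 + c * ν k : ℂ)) * Qᴴ := by
      rw [hQspec]
      have h2 : Matrix.diagonal (fun k => (1 + c * ν k : ℂ))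
          = 1 + (c : ℂ) • Matrix.diagonal (fun k => (ν k : ℂ)) := by
        rw [← Matrix.diagonal_one, ← Matrix.diagonal_smul, ← Matrix.diagonal_add]
        congr 1
      rw [h2, Matrix.mul_add, Matrix.add_mul, Matrix.mul_one, hQQ]
      congr 1
      rw [Matrix.mul_smul, Matrix.smul_mul]
    rw [h1, Matrix.det_mul_right_comm, hQQ, Matrix.one_mul, Matrix.det_diagonal]
    push_cast
    rfl
  rw [hdet, Complex.ofReal_re]
  have hfpos : ∀ k : Fin m, (0:ℝ) < 1 + c * ν k := fun k => by
    have := mul_nonneg hc (hνnn k); linarith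
  rw [Real.logb_prod _ _ (fun k _ => (hfpos k).ne')]
  refine Finset.sum_le_sum fun j _ => ?_
  refine Real.logb_le_logb_of_le one_lt_two (hfpos j) ?_
  have hint : ν j ≤ μ (Fin.castLE hmn j) :=
    aux_interlacing hmn He μ hμ U hU hdec V hV ν hν Q hQunit hQspec j
  nlinarith [hc, hint]
end

section
/- (Theorem 1) Let H_e ∈ ℂ^{n×n} be Hermitian positive semidefinite with eigenvalues λ_1 ≥ ⋯ ≥ λ_n and corresponding orthonormal eigenvectors v_1, …, v_n, and set V* = [v_1, …, v_m] ∈ ℂ^{n×m} for m ≤ n. Fix c ≥ 0. For any invertible matrix C ∈ ℂ^{m×m}, the matrix F* = V*·C has full column rank (so F*ᴴF* is positive definite), and the matrix P = F*·(F*ᴴF*)^{-1/2} (where (·)^{-1/2} is the inverse of the positive-definite square root) satisfies PᴴP = I_m and log₂ det(I_m + c·PᴴH_eP) = Σ_{i=1}^{m} log₂(1 + c·λ_i), which is the maximum of log₂ det(I_m + c·VᴴH_eV) over all semi-orthogonal V ∈ ℂ^{n×m}. -/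
/-!
Write `W = Uᴴ V` and `d_i = 1 + c λ_i`. Since `VᴴV = 1`, the matrix `I + c VᴴH_eV` equals
`Wᴴ diag(d) W` with `WᴴW = 1`. The Cauchy–Binet formula expands its determinant as
`∑_g (∏_i d_{g i}) |det W_g|²` over strictly increasing `g : Fin m → Fin n`, where `W_g` is the
`m × m` block of rows `g`. The weights `|det W_g|²` sum to `det (WᴴW) = 1`, and since `g i ≥ i`
and `d` is antitone and nonnegative, each `∏_i d_{g i}` is at most `∏_{i < m} d_i`. The bound is
attained by `P = V* Q`, where `Q = C (F*ᴴF*)^{-1/2}` is unitary because `F*ᴴF* = CᴴC`.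
-/

open Matrix ComplexOrder

/-- The positive semidefinite square root of a positive semidefinite matrix, as defined in
Mathlib (December 2024), where it has since been removed. -/
noncomputable def Matrix.PosSemidef.sqrt {n : Type*} [Fintype n] [DecidableEq n]
    {𝕜 : Type*} [RCLike 𝕜] {A : Matrix n n 𝕜} (hA : A.PosSemidef) : Matrix n n 𝕜 :=
  hA.1.eigenvectorUnitary.1 * diagonal ((↑) ∘ (√·) ∘ hA.1.eigenvalues) *
  (star hA.1.eigenvectorUnitary : Matrix n n 𝕜)

open Finset

theorem Tuple.sort_comp_perm_of_strictMono {n : ℕ} {α : Type*} [LinearOrder α] {g : Fin n → α}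
    (hg : StrictMono g) (σ : Equiv.Perm (Fin n)) : Tuple.sort (g ∘ σ) = σ⁻¹ := by
  refine (Tuple.eq_sort_iff.2 ⟨?_, fun i j hij hgij => ?_⟩).symm
  · simpa [Function.comp_def] using hg.monotone
  · simp only [Equiv.Perm.coe_inv, Function.comp_apply, Equiv.apply_symm_apply] at hgij
    exact absurd (hg.injective hgij) hij.ne

theorem Fin.val_le_val_of_strictMono {m n : ℕ} {g : Fin m → Fin n} (hg : StrictMono g) :
    ∀ i : Fin m, (i : ℕ) ≤ g i
  | ⟨0, _⟩ => Nat.zero_le _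
  | ⟨k + 1, hk⟩ =>
    Nat.lt_of_le_of_lt (Fin.val_le_val_of_strictMono hg ⟨k, by omega⟩) (hg (Nat.lt_succ_self k))

namespace Matrix

section CauchyBinet

variable {R : Type*} [CommRing R] {m : ℕ} {ι : Type*}

theorem det_submatrix_eq_zero_of_not_injective (A : Matrix (Fin m) ι R) {f : Fin m → ι}
    (hf : ¬ f.Injective) : (A.submatrix id f).det = 0 := by
  simp only [Function.Injective, not_forall] at hf
  obtain ⟨i, j, hij, hne⟩ := hf
  exact det_zero_of_column_eq hne fun k => by simp [hij]

variable [Fintype ι]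

theorem det_mul_eq_sum_det_submatrix_mul_prod (A : Matrix (Fin m) ι R) (B : Matrix ι (Fin m) R) :
    (A * B).det = ∑ f : Fin m → ι, (A.submatrix id f).det * ∏ i, B (f i) i := by
  have expand : ∀ σ : Equiv.Perm (Fin m), ∏ i, (A * B) (σ i) i
      = ∑ f : Fin m → ι, (∏ i, A (σ i) (f i)) * ∏ i, B (f i) i := by
    intro σ
    simp only [mul_apply, prod_univ_sum, Fintype.piFinset_univ, prod_mul_distrib]
  simp_rw [det_apply, expand, smul_sum, sum_mul, smul_mul_assoc]
  exact sum_comm.trans (by simp)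

variable [LinearOrder ι]

open scoped Classical in
theorem det_mul_eq_sum_strictMono (A : Matrix (Fin m) ι R) (B : Matrix ι (Fin m) R) :
    (A * B).det = ∑ g : Fin m → ι with StrictMono g,
      (A.submatrix id g).det * (B.submatrix g id).det := by
  set F : (Fin m → ι) → R := fun f => (A.submatrix id f).det * ∏ i, B (f i) i
  have regroup : ∀ g : Fin m → ι, (A.submatrix id g).det * (B.submatrix g id).det
      = ∑ σ : Equiv.Perm (Fin m), F (g ∘ σ) := by
    intro g
    rw [det_apply (B.submatrix g id), mul_sum]
    refine sum_congr rfl fun σ _ => ?_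
    have hperm : A.submatrix id (g ∘ σ) = (A.submatrix id g).submatrix id σ := rfl
    dsimp only [F]
    rw [hperm, det_permute', Units.smul_def, zsmul_eq_mul]
    simp only [submatrix_apply, id_eq, Function.comp_apply]
    ring
  calc (A * B).det = ∑ f, F f := det_mul_eq_sum_det_submatrix_mul_prod A B
    _ = ∑ f with f.Injective, F f := (sum_filter_of_ne fun f _ hf => by
        by_contra hinj
        exact hf (by simp [F, det_submatrix_eq_zero_of_not_injective A hinj])).symm
    _ = ∑ p ∈ ({g | StrictMono g} : Finset (Fin m → ι)) ×ˢ (univ : Finset (Equiv.Perm (Fin m))),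
        F (p.1 ∘ p.2) := by
      -- an injective `f` is its increasing rearrangement `f ∘ sort f` composed with a permutation
      refine sum_nbij' (fun f => (f ∘ Tuple.sort f, (Tuple.sort f)⁻¹)) (fun p => p.1 ∘ p.2)
        ?_ ?_ ?_ ?_ fun f _ => by simp [Function.comp_assoc]
      · intro f hf
        simp only [mem_product, mem_filter, mem_univ, true_and, and_true] at hf ⊢
        exact (Tuple.monotone_sort f).strictMono_of_injective (hf.comp (Tuple.sort f).injective)
      · rintro ⟨g, σ⟩ hp
        simp only [mem_product, mem_filter, mem_univ, true_and, and_true] at hp ⊢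
        exact hp.injective.comp σ.injective
      · intro f _
        simp [Function.comp_assoc]
      · rintro ⟨g, σ⟩ hp
        simp only [mem_product, mem_filter, mem_univ, true_and, and_true] at hp
        simp [Tuple.sort_comp_perm_of_strictMono hp, Function.comp_assoc]
    _ = _ := by rw [sum_product]; exact sum_congr rfl fun g _ => (regroup g).symm

open scoped Classical in
theorem det_conjTranspose_mul_diagonal_mul [StarRing R] (W : Matrix ι (Fin m) R) (d : ι → R) :
    (Wᴴ * diagonal d * W).det = ∑ g : Fin m → ι with StrictMono g,
      (∏ i, d (g i)) * (star (W.submatrix g id).det * (W.submatrix g id).det) := by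
  rw [det_mul_eq_sum_strictMono]
  refine sum_congr rfl fun g _ => ?_
  have hsub : (Wᴴ * diagonal d).submatrix id g = (W.submatrix g id)ᴴ * diagonal (d ∘ g) := by
    ext i j
    simp [mul_diagonal]
  rw [hsub, det_mul, det_diagonal, det_conjTranspose]
  simp only [Function.comp_apply]
  ring

end CauchyBinet

section Isometry

variable {R : Type*} [CommRing R] [StarRing R] {n m : Type*} [Fintype n]

theorem one_add_smul_conjTranspose_mul_mul [DecidableEq m] {W : Matrix n m R} (hW : Wᴴ * W = 1)
    (a : R) (X : Matrix n n R) [DecidableEq n] :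
    1 + a • (Wᴴ * X * W) = Wᴴ * (1 + a • X) * W := by
  rw [Matrix.mul_add, Matrix.add_mul, Matrix.mul_one, hW, Matrix.mul_smul, Matrix.smul_mul]

theorem det_conjTranspose_mul_mul_of_conjTranspose_mul_self_eq_one [Fintype m] [DecidableEq m]
    {Q : Matrix m m R} (hQ : Qᴴ * Q = 1) (X : Matrix m m R) :
    (Qᴴ * X * Q).det = X.det := by
  rw [det_mul, det_mul, mul_right_comm, ← det_mul, hQ, det_one, one_mul]

theorem conjTranspose_mul_inv_mul_mul_inv_eq_one [Fintype m] [DecidableEq m] {F : Matrix n m R}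
    {S : Matrix m m R} (hS : Sᴴ = S) (hSS : S * S = Fᴴ * F) (hdet : IsUnit S.det) :
    (F * S⁻¹)ᴴ * (F * S⁻¹) = 1 := by
  rw [conjTranspose_mul, conjTranspose_nonsing_inv, hS]
  calc S⁻¹ * Fᴴ * (F * S⁻¹) = S⁻¹ * S * (S * S⁻¹) := by
        rw [Matrix.mul_assoc S⁻¹ S, ← Matrix.mul_assoc S, hSS]; simp only [Matrix.mul_assoc]
    _ = 1 := by rw [nonsing_inv_mul S hdet, mul_nonsing_inv S hdet, Matrix.one_mul]

theorem conjTranspose_mul_mul_self_of_conjTranspose_mul_self_eq_one [Fintype m] [DecidableEq m]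
    {l : Type*} {W : Matrix n m R} (hW : Wᴴ * W = 1) (C : Matrix m l R) :
    (W * C)ᴴ * (W * C) = Cᴴ * C := by
  rw [conjTranspose_mul, Matrix.mul_assoc, ← Matrix.mul_assoc Wᴴ, hW, Matrix.one_mul]

theorem conjTranspose_mul_mul_conjTranspose_mul [DecidableEq n] {U : Matrix n n R}
    (hU : Uᴴ * U = 1) (X : Matrix n n R) : Uᴴ * (U * X * Uᴴ) * U = X := by
  simp only [← Matrix.mul_assoc, hU, Matrix.one_mul]
  rw [Matrix.mul_assoc, hU, Matrix.mul_one]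

theorem conjTranspose_submatrix_mul_mul_submatrix_s5 (U X : Matrix n n R) (e : m → n) :
    (U.submatrix id e)ᴴ * X * U.submatrix id e = (Uᴴ * X * U).submatrix e e := by
  rw [submatrix_mul _ _ _ _ _ Function.bijective_id, submatrix_mul _ _ _ _ _ Function.bijective_id,
    conjTranspose_submatrix]
  rfl

theorem conjTranspose_submatrix_mul_submatrix_eq_one [DecidableEq n] [DecidableEq m]
    {U : Matrix n n R} (hU : Uᴴ * U = 1) {e : m → n} (he : e.Injective) :
    (U.submatrix id e)ᴴ * U.submatrix id e = 1 := by
  simpa [hU, submatrix_one _ he] using conjTranspose_submatrix_mul_mul_submatrix_s5 U 1 e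

end Isometry

section RCLike

variable {𝕜 : Type*} [RCLike 𝕜]

theorem det_conjTranspose_mul_diagonal_mul_le {m n : ℕ} (hmn : m ≤ n) {d : Fin n → ℝ}
    (hd : Antitone d) (hd0 : ∀ i, 0 ≤ d i) {W : Matrix (Fin n) (Fin m) 𝕜} (hW : Wᴴ * W = 1) :
    (Wᴴ * diagonal (fun i => (d i : 𝕜)) * W).det
      ≤ ((∏ i : Fin m, d (Fin.castLE hmn i) : ℝ) : 𝕜) := by
  classical
  set w : (Fin m → Fin n) → 𝕜 := fun g => star (W.submatrix g id).det * (W.submatrix g id).det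
  have hw_sum : ∑ g : Fin m → Fin n with StrictMono g, w g = 1 := by
    simpa [w, hW] using (det_conjTranspose_mul_diagonal_mul W 1).symm
  have hprod_le : ∀ g : Fin m → Fin n, StrictMono g →
      ((∏ i, d (g i) : ℝ) : 𝕜) ≤ ((∏ i : Fin m, d (Fin.castLE hmn i) : ℝ) : 𝕜) := fun g hg =>
    RCLike.ofReal_le_ofReal.2 <| prod_le_prod (fun i _ => hd0 _) fun i _ =>
      hd (Fin.val_le_val_of_strictMono hg i)
  calc (Wᴴ * diagonal (fun i => (d i : 𝕜)) * W).det
      = ∑ g : Fin m → Fin n with StrictMono g, ((∏ i, d (g i) : ℝ) : 𝕜) * w g := by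
        simp [det_conjTranspose_mul_diagonal_mul, w]
    _ ≤ ∑ g : Fin m → Fin n with StrictMono g,
        ((∏ i : Fin m, d (Fin.castLE hmn i) : ℝ) : 𝕜) * w g :=
      sum_le_sum fun g hg => mul_le_mul_of_nonneg_right (hprod_le g (mem_filter.1 hg).2)
        (star_mul_self_nonneg _)
    _ = _ := by rw [← mul_sum, hw_sum, mul_one]

section Sqrt

variable {n : Type*} [Fintype n] [DecidableEq n]

theorem PosSemidef.conjTranspose_sqrt {A : Matrix n n 𝕜} (hA : A.PosSemidef) :
    hA.sqrtᴴ = hA.sqrt := by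
  simp [PosSemidef.sqrt, conjTranspose_mul, diagonal_conjTranspose, star_eq_conjTranspose,
    Matrix.mul_assoc, Function.comp_def, Pi.star_def, RCLike.star_def]

theorem PosSemidef.sqrt_mul_self {A : Matrix n n 𝕜} (hA : A.PosSemidef) :
    hA.sqrt * hA.sqrt = A := by
  set V : Matrix n n 𝕜 := (hA.1.eigenvectorUnitary : Matrix n n 𝕜)
  set D : Matrix n n 𝕜 := diagonal ((↑) ∘ (√·) ∘ hA.1.eigenvalues)
  have hV : star V * V = 1 := Unitary.coe_star_mul_self _
  have hDD : D * D = diagonal ((↑) ∘ hA.1.eigenvalues) := by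
    rw [diagonal_mul_diagonal]
    congr 1
    funext i
    simp [← RCLike.ofReal_mul, Real.mul_self_sqrt (hA.eigenvalues_nonneg i)]
  calc hA.sqrt * hA.sqrt = V * (D * D) * star V := by
        simp only [PosSemidef.sqrt, Matrix.mul_assoc, ← Matrix.mul_assoc (star V) V, hV,
          Matrix.one_mul, V, D]
    _ = A := by
      rw [hDD]
      conv_rhs => rw [hA.1.spectral_theorem, Unitary.conjStarAlgAut_apply]

theorem PosDef.isUnit_det_sqrt {A : Matrix n n 𝕜} (hA : A.PosDef) :
    IsUnit hA.posSemidef.sqrt.det := by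
  have h : hA.posSemidef.sqrt.det * hA.posSemidef.sqrt.det = A.det := by
    rw [← det_mul, hA.posSemidef.sqrt_mul_self]
  exact isUnit_iff_ne_zero.2 fun h0 => hA.det_pos.ne' (by rw [← h, h0, mul_zero])

theorem PosDef.conjTranspose_mul_inv_sqrt_mul_mul_inv_sqrt {A : Matrix n n 𝕜} (hA : A.PosDef)
    {m : Type*} [Fintype m] {G : Matrix m n 𝕜} (hG : Gᴴ * G = A) :
    (G * hA.posSemidef.sqrt⁻¹)ᴴ * (G * hA.posSemidef.sqrt⁻¹) = 1 :=
  conjTranspose_mul_inv_mul_mul_inv_eq_one hA.posSemidef.conjTranspose_sqrt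
    (hA.posSemidef.sqrt_mul_self.trans hG.symm) hA.isUnit_det_sqrt

end Sqrt

theorem one_add_smul_diagonal_ofReal {ι : Type*} [DecidableEq ι] (c : ℝ) (μ : ι → ℝ) :
    (1 : Matrix ι ι 𝕜) + (c : 𝕜) • diagonal (fun i => (μ i : 𝕜))
      = diagonal (fun i => ((1 + c * μ i : ℝ) : 𝕜)) := by
  rw [← diagonal_one, ← diagonal_smul, diagonal_add]
  congr 1
  funext i
  simp

theorem PosSemidef.nonneg_of_eq_mul_diagonal_mul_conjTranspose {ι : Type*} [Fintype ι]
    [DecidableEq ι] {H U : Matrix ι ι 𝕜} {μ : ι → ℝ} (hH : H.PosSemidef) (hU : Uᴴ * U = 1)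
    (hdec : H = U * diagonal (fun i => (μ i : 𝕜)) * Uᴴ) (i : ι) : 0 ≤ μ i := by
  have hpsd := hH.conjTranspose_mul_mul_same U
  rw [hdec, conjTranspose_mul_mul_conjTranspose_mul hU, posSemidef_diagonal_iff] at hpsd
  exact RCLike.ofReal_nonneg.1 (hpsd i)

theorem det_one_add_smul_conjTranspose_mul_mul_pos {ι κ : Type*} [Fintype ι] [Fintype κ]
    [DecidableEq κ] {H : Matrix ι ι 𝕜} (hH : H.PosSemidef) {c : ℝ} (hc : 0 ≤ c)
    (V : Matrix ι κ 𝕜) : 0 < (1 + (c : 𝕜) • (Vᴴ * H * V)).det :=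
  (PosDef.one.add_posSemidef
    ((hH.conjTranspose_mul_mul_same V).smul (RCLike.ofReal_nonneg.2 hc))).det_pos

variable {n m : ℕ} (hmn : m ≤ n) {H U : Matrix (Fin n) (Fin n) 𝕜} {μ : Fin n → ℝ} {c : ℝ}

theorem det_one_add_smul_conjTranspose_mul_mul_le (hμ : Antitone μ)
    (hμ0 : ∀ i, 0 ≤ μ i) (hc : 0 ≤ c) (hU : Uᴴ * U = 1)
    (hH : H = U * diagonal (fun i => (μ i : 𝕜)) * Uᴴ) {V : Matrix (Fin n) (Fin m) 𝕜}
    (hV : Vᴴ * V = 1) :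
    (1 + (c : 𝕜) • (Vᴴ * H * V)).det
      ≤ ((∏ i : Fin m, (1 + c * μ (Fin.castLE hmn i)) : ℝ) : 𝕜) := by
  set W := Uᴴ * V
  have hW : Wᴴ * W = 1 := by
    have hUU : Uᴴᴴ * Uᴴ = 1 := by rw [conjTranspose_conjTranspose]; exact mul_eq_one_comm.1 hU
    rw [conjTranspose_mul_mul_self_of_conjTranspose_mul_self_eq_one hUU, hV]
  have hconj : Vᴴ * H * V = Wᴴ * diagonal (fun i => (μ i : 𝕜)) * W := by
    simp only [hH, W, conjTranspose_mul, conjTranspose_conjTranspose, Matrix.mul_assoc]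
  rw [hconj, one_add_smul_conjTranspose_mul_mul hW, one_add_smul_diagonal_ofReal]
  exact det_conjTranspose_mul_diagonal_mul_le hmn (fun i j hij => by nlinarith [hμ hij])
    (fun i => by nlinarith [hμ0 i]) hW

theorem det_one_add_smul_conjTranspose_mul_mul_leading_eigenvectors (hU : Uᴴ * U = 1)
    (hH : H = U * diagonal (fun i => (μ i : 𝕜)) * Uᴴ) {Q : Matrix (Fin m) (Fin m) 𝕜}
    (hQ : Qᴴ * Q = 1) :
    (1 + (c : 𝕜) • ((U.submatrix id (Fin.castLE hmn) * Q)ᴴ * H *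
        (U.submatrix id (Fin.castLE hmn) * Q))).det
      = ((∏ i : Fin m, (1 + c * μ (Fin.castLE hmn i)) : ℝ) : 𝕜) := by
  have hcompress : (U.submatrix id (Fin.castLE hmn))ᴴ * H * U.submatrix id (Fin.castLE hmn)
      = diagonal (fun i => (μ (Fin.castLE hmn i) : 𝕜)) := by
    rw [conjTranspose_submatrix_mul_mul_submatrix_s5, hH, conjTranspose_mul_mul_conjTranspose_mul hU]
    exact submatrix_diagonal _ _ (Fin.castLE_injective hmn)
  have hconj : (U.submatrix id (Fin.castLE hmn) * Q)ᴴ * H * (U.submatrix id (Fin.castLE hmn) * Q)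
      = Qᴴ * ((U.submatrix id (Fin.castLE hmn))ᴴ * H * U.submatrix id (Fin.castLE hmn)) * Q := by
    simp only [conjTranspose_mul, Matrix.mul_assoc]
  rw [hconj, hcompress, one_add_smul_conjTranspose_mul_mul hQ,
    det_conjTranspose_mul_mul_of_conjTranspose_mul_self_eq_one hQ, one_add_smul_diagonal_ofReal,
    det_diagonal, RCLike.ofReal_prod]

end RCLike

end Matrix

/-- Theorem 1: Let `H_e ∈ ℂ^{n×n}` be Hermitian positive semidefinite with
eigenvalues `λ_1 ≥ … ≥ λ_n` and corresponding orthonormal eigenvectors given by the columns of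
a unitary `U` (so `H_e = U diag(λ) Uᴴ` with `λ` antitone), and set `V* = [v_1, …, v_m]`,
the first `m ≤ n` columns of `U`. Fix `c ≥ 0`. For any invertible `C ∈ ℂ^{m×m}`, the matrix
`F* = V* C` has full column rank (so `F*ᴴF*` is positive definite), and
`P = F* (F*ᴴF*)^{-1/2}` satisfies `PᴴP = I` and
`log₂ det(I + c PᴴH_eP) = ∑_{i=1}^m log₂(1 + c λ_i)`, which is the maximum of
`log₂ det(I + c VᴴH_eV)` over all semi-orthogonal `V ∈ ℂ^{n×m}`. -/
theorem stmt_5 {n m : ℕ} (hmn : m ≤ n)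
    (He : Matrix (Fin n) (Fin n) ℂ) (hHe : He.PosSemidef)
    (μ : Fin n → ℝ) (hμ : Antitone μ)
    (U : Matrix (Fin n) (Fin n) ℂ) (hU : Uᴴ * U = 1)
    (hdec : He = U * Matrix.diagonal (fun i => (μ i : ℂ)) * Uᴴ)
    (c : ℝ) (hc : 0 ≤ c)
    (C : Matrix (Fin m) (Fin m) ℂ) (hC : IsUnit C.det)
    (Vs : Matrix (Fin n) (Fin m) ℂ)
    (hVs : Vs = U.submatrix id (Fin.castLE hmn))
    (F : Matrix (Fin n) (Fin m) ℂ) (hF : F = Vs * C) :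
    F.rank = m ∧ (Fᴴ * F).PosDef ∧
    ∀ hpd : (Fᴴ * F).PosDef,
      (F * (hpd.posSemidef.sqrt)⁻¹)ᴴ * (F * (hpd.posSemidef.sqrt)⁻¹) = 1 ∧
      Real.logb 2
          ((1 + (c : ℂ) •
            ((F * (hpd.posSemidef.sqrt)⁻¹)ᴴ * He * (F * (hpd.posSemidef.sqrt)⁻¹))).det).re
        = ∑ i : Fin m, Real.logb 2 (1 + c * μ (Fin.castLE hmn i)) ∧
      ∀ V : Matrix (Fin n) (Fin m) ℂ, Vᴴ * V = 1 →
        Real.logb 2 ((1 + (c : ℂ) • (Vᴴ * He * V)).det).re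
          ≤ ∑ i : Fin m, Real.logb 2 (1 + c * μ (Fin.castLE hmn i)) := by
  have hμ0 := hHe.nonneg_of_eq_mul_diagonal_mul_conjTranspose hU hdec
  have hlogb : Real.logb 2 (∏ i : Fin m, (1 + c * μ (Fin.castLE hmn i)))
      = ∑ i : Fin m, Real.logb 2 (1 + c * μ (Fin.castLE hmn i)) :=
    Real.logb_prod _ _ fun i _ => by nlinarith [hμ0 (Fin.castLE hmn i)]
  have hFF : Fᴴ * F = Cᴴ * C := by
    rw [hF, hVs, conjTranspose_mul_mul_self_of_conjTranspose_mul_self_eq_one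
      (conjTranspose_submatrix_mul_submatrix_eq_one hU (Fin.castLE_injective hmn))]
  have hpd : (Fᴴ * F).PosDef := hFF ▸ PosDef.conjTranspose_mul_self C
    (mulVec_injective_iff_isUnit.2 ((isUnit_iff_isUnit_det C).2 hC))
  refine ⟨by simpa using (rank_conjTranspose_mul_self F).symm.trans (rank_of_isUnit _ hpd.isUnit),
    hpd, fun hpd' => ⟨hpd'.conjTranspose_mul_inv_sqrt_mul_mul_inv_sqrt rfl, ?_, fun V hV => ?_⟩⟩
  · have hdetP : (1 + (c : ℂ) • ((Vs * (C * hpd'.posSemidef.sqrt⁻¹))ᴴ * He *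
        (Vs * (C * hpd'.posSemidef.sqrt⁻¹)))).det
          = ((∏ i : Fin m, (1 + c * μ (Fin.castLE hmn i)) : ℝ) : ℂ) :=
      hVs ▸ det_one_add_smul_conjTranspose_mul_mul_leading_eigenvectors hmn hU hdec
        (hpd'.conjTranspose_mul_inv_sqrt_mul_mul_inv_sqrt hFF.symm)
    have hP : ∀ X, F * X = Vs * (C * X) := fun X => by rw [hF, Matrix.mul_assoc]
    rw [hP, hdetP, Complex.ofReal_re, hlogb]
  · have hle : (1 + (c : ℂ) • (Vᴴ * He * V)).det
        ≤ ((∏ i : Fin m, (1 + c * μ (Fin.castLE hmn i)) : ℝ) : ℂ) :=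
      det_one_add_smul_conjTranspose_mul_mul_le hmn hμ hμ0 hc hU hdec hV
    rw [← hlogb]
    exact Real.logb_le_logb_of_le one_lt_two
      (Complex.lt_def.1 (det_one_add_smul_conjTranspose_mul_mul_pos hHe hc V)).1
      (by simpa only [Complex.ofReal_re] using (Complex.le_def.1 hle).1)
end

section
/- Let H_1, …, H_K ∈ ℂ^{p×n} be arbitrary matrices, let V ∈ ℂ^{n×m} (m ≤ n) satisfy VᴴV = I_m, let c ≥ 0 be real, and define H_e = (1/K)·Σ_{k=1}^{K} H_kᴴH_k with eigenvalues λ_1(H_e) ≥ ⋯ ≥ λ_n(H_e). Then (1/K)·Σ_{k=1}^{K} log₂ det(I_m + c·VᴴH_kᴴH_kV) ≤ Σ_{i=1}^{m} log₂(1 + c·λ_i(H_e)). -/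
/-!
`log det` is concave on positive definite matrices: writing `M = BᴴB` and `N = BᴴCB`, one has
`det (tM + sN) = det M · ∏ᵢ (t + s γᵢ)` over the eigenvalues `γᵢ` of `C`, and weighted AM–GM gives
`det (tM + sN) ≥ (det M)ᵗ (det N)ˢ`. Jensen's inequality therefore bounds the average of
`log det (I + c Vᴴ H_kᴴ H_k V)` by `log det (I + c Vᴴ H_e V)`. With `H_e = U diag(λ) Uᴴ` and
`W = Uᴴ V`, the latter matrix is `Wᴴ diag(1 + cλ) W`. By Cauchy–Binet its determinant is a
combination of the products `∏_{j ∈ S} (1 + cλⱼ)` over `m`-subsets `S`, with weights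
`det ((W Wᴴ)_{SS}) ≥ 0` summing to `det (Wᴴ W) = 1`, and each product is at most the one over the
`m` largest eigenvalues.
-/

open Matrix ComplexOrder Finset

theorem Fin.val_le_of_strictMono {m n : ℕ} {f : Fin m → Fin n} (hf : StrictMono f) (i : Fin m) :
    (i : ℕ) ≤ f i := by
  have := card_le_card_of_injOn f (s := Iic i) (t := Iic (f i))
    (fun j hj => mem_Iic.2 (hf.monotone (mem_Iic.1 hj))) hf.injective.injOn
  simpa using this

theorem Finset.prod_le_prod_castLE_of_antitone {R : Type*} [CommSemiring R] [PartialOrder R]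
    [IsOrderedRing R] {m n : ℕ} (hmn : m ≤ n) {e : Fin n → R} (he0 : 0 ≤ e) (he : Antitone e)
    {s : Finset (Fin n)} (hs : s.card = m) :
    ∏ j ∈ s, e j ≤ ∏ i : Fin m, e (Fin.castLE hmn i) := by
  rw [← map_orderEmbOfFin_univ s hs, prod_map]
  exact prod_le_prod (fun i _ => he0 _) fun i _ =>
    he (Fin.le_def.2 (Fin.val_le_of_strictMono (s.orderEmbOfFin hs).strictMono i))

namespace Matrix

section CauchyBinet

open Polynomial

variable {R : Type*} [CommRing R] {m n : Type*} [Fintype m] [DecidableEq m] [Fintype n]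
  [DecidableEq n]

theorem coeff_det_one_add_X_smul_card (M : Matrix m m R) :
    (det (1 + (X : R[X]) • M.map C)).coeff (Fintype.card m) = M.det := by
  rw [coeff_det_one_add_X_smul_eq_sum_minors, ← card_univ, powersetCard_self, sum_singleton]
  exact det_submatrix_equiv_self (Equiv.subtypeUnivEquiv mem_univ) M

/-- Cauchy–Binet, obtained by comparing the coefficients of `X ^ card m` in
`det (1 + X A B) = det (1 + X B A)`. -/
theorem det_mul_eq_sum_det_submatrix (A : Matrix m n R) (B : Matrix n m R) :
    (A * B).det = ∑ s ∈ univ.powersetCard (Fintype.card m),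
      ((B * A).submatrix (Subtype.val : s → n) Subtype.val).det := by
  rw [← coeff_det_one_add_X_smul_card, ← coeff_det_one_add_X_smul_eq_sum_minors, Matrix.map_mul,
    Matrix.map_mul, ← smul_mul, det_one_add_mul_comm, Matrix.mul_smul]

theorem det_diagonal_mul_submatrix {p : Type*} [Fintype p] [DecidableEq p] (d : n → R)
    (M : Matrix n n R) (f : p → n) :
    ((diagonal d * M).submatrix f f).det = (∏ i, d (f i)) * (M.submatrix f f).det := by
  rw [← det_diagonal, ← det_mul]
  congr 1
  ext i j
  simp [diagonal_mul]

end CauchyBinet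

theorem convex_setOf_posDef {n : Type*} : Convex ℝ {M : Matrix n n ℂ | M.PosDef} := by
  intro M hM N hN t s ht hs hts
  rcases ht.lt_or_eq with ht | rfl
  · exact (hM.smul ht).add_posSemidef (hN.posSemidef.smul hs)
  · obtain rfl : s = 1 := by simpa using hts
    simpa using hN

variable {m n : Type*} [Fintype m] [DecidableEq m] [Fintype n] [DecidableEq n]

theorem det_conjTranspose_mul_diagonal_mul_le_s7 {W : Matrix n m ℂ} (hW : Wᴴ * W = 1) {e : n → ℝ}
    {b : ℝ} (hb : ∀ s ∈ univ.powersetCard (Fintype.card m), ∏ j ∈ s, e j ≤ b) :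
    (Wᴴ * diagonal (fun j => (e j : ℂ)) * W).det ≤ b := by
  set P : Finset n → ℂ := fun s => ((W * Wᴴ).submatrix (Subtype.val : s → n) Subtype.val).det
  have hP : ∀ s, 0 ≤ P s := fun s => by
    have := (posSemidef_self_mul_conjTranspose (W.submatrix (Subtype.val : s → n) id)).det_nonneg
    rwa [conjTranspose_submatrix, ← submatrix_mul _ _ _ _ _ (Function.bijective_id (α := m))]
      at this
  have hP1 : ∑ s ∈ univ.powersetCard (Fintype.card m), P s = 1 := by
    rw [← det_one (n := m) (R := ℂ), ← hW, det_mul_eq_sum_det_submatrix]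
  calc (Wᴴ * diagonal (fun j => (e j : ℂ)) * W).det
      = ∑ s ∈ univ.powersetCard (Fintype.card m), ((∏ j ∈ s, e j : ℝ) : ℂ) * P s := by
        rw [Matrix.mul_assoc, det_mul_eq_sum_det_submatrix]
        refine sum_congr rfl fun s _ => ?_
        rw [Matrix.mul_assoc, det_diagonal_mul_submatrix, Complex.ofReal_prod]
        congr 1
        convert prod_coe_sort s (fun j => (e j : ℂ))
    _ ≤ ∑ s ∈ univ.powersetCard (Fintype.card m), (b : ℂ) * P s := by
        gcongr with s hs
        · exact hP s
        · exact_mod_cast hb s hs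
    _ = b := by rw [← mul_sum, hP1, mul_one]

theorem nonneg_of_eq_mul_diagonal_mul_conjTranspose {A U : Matrix n n ℂ} (hA : A.PosSemidef)
    (hU : Uᴴ * U = 1) {μ : n → ℝ} (hAU : A = U * diagonal (fun i => (μ i : ℂ)) * Uᴴ) :
    0 ≤ μ := by
  have hdiag : (diagonal fun i => (μ i : ℂ)).PosSemidef := by
    have := hA.conjTranspose_mul_mul_same U
    rwa [hAU, Matrix.mul_assoc, Matrix.mul_assoc, hU, Matrix.mul_one, ← Matrix.mul_assoc, hU,
      Matrix.one_mul] at this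
  intro i
  exact_mod_cast posSemidef_diagonal_iff.1 hdiag i

theorem IsHermitian.det_smul_one_add_smul {C : Matrix n n ℂ} (hC : C.IsHermitian) (t s : ℝ) :
    (t • 1 + s • C).det = ∏ i, ((t + s * hC.eigenvalues i : ℝ) : ℂ) := by
  set U := hC.eigenvectorUnitary
  have hconj : t • 1 + s • C =
      U * diagonal (fun i => ((t + s * hC.eigenvalues i : ℝ) : ℂ)) * star (U : Matrix n n ℂ) := by
    conv_lhs => rw [hC.spectral_theorem]
    rw [Unitary.conjStarAlgAut_apply]
    have hd : diagonal (fun i => ((t + s * hC.eigenvalues i : ℝ) : ℂ)) =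
        t • 1 + s • diagonal (RCLike.ofReal ∘ hC.eigenvalues) := by
      ext i j
      rcases eq_or_ne i j with rfl | hij <;> simp [*]
    rw [hd, Matrix.mul_add, Matrix.add_mul, Matrix.mul_smul, Matrix.smul_mul, Matrix.mul_one,
      Unitary.mul_star_self_of_mem U.2, Matrix.mul_smul, Matrix.smul_mul]
  rw [hconj, det_conj_of_mul_eq_one (Unitary.mul_star_self_of_mem U.2)
    (Unitary.star_mul_self_of_mem U.2), det_diagonal]

theorem PosSemidef.det_re_rpow_le {C : Matrix n n ℂ} (hC : C.PosSemidef) {t s : ℝ} (ht : 0 ≤ t)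
    (hs : 0 ≤ s) (hts : t + s = 1) : C.det.re ^ s ≤ (t • 1 + s • C).det.re := by
  have hγ := hC.eigenvalues_nonneg
  rw [hC.1.det_smul_one_add_smul, hC.1.det_eq_prod_eigenvalues]
  simp only [RCLike.ofReal_eq_complex_ofReal, ← Complex.ofReal_prod, Complex.ofReal_re]
  rw [← Real.finsetProd_rpow _ _ fun i _ => hγ i]
  refine prod_le_prod (fun i _ => Real.rpow_nonneg (hγ i) s) fun i _ => ?_
  simpa using Real.geom_mean_le_arith_mean2_weighted ht hs zero_le_one (hγ i) hts

theorem PosSemidef.ofReal_det_re {A : Matrix n n ℂ} (hA : A.PosSemidef) :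
    (A.det.re : ℂ) = A.det :=
  (Complex.eq_re_of_ofReal_le hA.det_nonneg).symm

theorem PosDef.det_re_pos {M : Matrix n n ℂ} (hM : M.PosDef) : 0 < M.det.re :=
  (Complex.lt_def.1 hM.det_pos).1

open scoped MatrixOrder in
theorem PosDef.det_re_rpow_mul_det_re_rpow_le {M N : Matrix n n ℂ} (hM : M.PosDef)
    (hN : N.PosDef) {t s : ℝ} (ht : 0 ≤ t) (hs : 0 ≤ s) (hts : t + s = 1) :
    M.det.re ^ t * N.det.re ^ s ≤ (t • M + s • N).det.re := by
  obtain ⟨B, rfl⟩ := CStarAlgebra.nonneg_iff_eq_star_mul_self.mp hM.posSemidef.nonneg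
  have hB : IsUnit B.det := by
    refine isUnit_iff_ne_zero.2 fun h => hM.det_pos.ne' ?_
    rw [det_mul, h, mul_zero]
  set C := (B⁻¹)ᴴ * N * B⁻¹
  have hC : C.PosSemidef := hN.posSemidef.conjTranspose_mul_mul_same B⁻¹
  have hNC : N = star B * C * B := by
    simp only [C, star_eq_conjTranspose, conjTranspose_nonsing_inv, Matrix.mul_assoc,
      nonsing_inv_mul _ hB, Matrix.mul_one]
    rw [← Matrix.mul_assoc, mul_nonsing_inv _ (by simpa using hB.star), Matrix.one_mul]
  have hsum : t • (star B * B) + s • N = star B * (t • 1 + s • C) * B := by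
    rw [hNC]
    simp only [Matrix.mul_add, Matrix.add_mul, Matrix.mul_smul, Matrix.smul_mul, Matrix.mul_one]
  set a := (star B * B).det.re
  have ha : 0 < a := hM.det_re_pos
  have hdet_re : ∀ X : Matrix n n ℂ, (star B * X * B).det.re = a * X.det.re := fun X => by
    rw [show (star B * X * B).det = (star B * B).det * X.det by simp only [det_mul]; ring,
      ← hM.posSemidef.ofReal_det_re, Complex.re_ofReal_mul]
  rw [hsum, hNC, hdet_re, hdet_re, Real.mul_rpow ha.le (Complex.nonneg_iff.1 hC.det_nonneg).1,
    ← mul_assoc, ← Real.rpow_add ha, hts, Real.rpow_one]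
  exact mul_le_mul_of_nonneg_left (hC.det_re_rpow_le ht hs hts) ha.le

theorem concaveOn_log_det_re :
    ConcaveOn ℝ {M : Matrix n n ℂ | M.PosDef} (fun M => Real.log M.det.re) := by
  refine ⟨convex_setOf_posDef, fun M hM N hN t s ht hs hts => ?_⟩
  have ha := PosDef.det_re_pos hM
  have hb := PosDef.det_re_pos hN
  calc t • Real.log M.det.re + s • Real.log N.det.re
      = Real.log (M.det.re ^ t * N.det.re ^ s) := by
        rw [Real.log_mul (Real.rpow_pos_of_pos ha t).ne' (Real.rpow_pos_of_pos hb s).ne',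
          Real.log_rpow ha, Real.log_rpow hb, smul_eq_mul, smul_eq_mul]
    _ ≤ Real.log (t • M + s • N).det.re :=
        Real.log_le_log (by positivity) (PosDef.det_re_rpow_mul_det_re_rpow_le hM hN ht hs hts)

theorem mean_log_det_re_one_add_smul_le {ι : Type*} [Fintype ι] [Nonempty ι] {c : ℝ}
    (hc : 0 ≤ c) {B : ι → Matrix n n ℂ} (hB : ∀ k, (B k).PosSemidef) :
    (Fintype.card ι : ℝ)⁻¹ * ∑ k, Real.log (1 + (c : ℂ) • B k).det.re ≤
      Real.log (1 + (c : ℂ) • ((Fintype.card ι : ℝ)⁻¹ • ∑ k, B k)).det.re := by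
  have hw : ∑ _k : ι, (Fintype.card ι : ℝ)⁻¹ = 1 := by
    rw [sum_const, card_univ, nsmul_eq_mul]
    field_simp
  have h := concaveOn_log_det_re.le_map_sum (t := univ) (fun _ _ => by positivity) hw
    fun k _ => PosDef.one.add_posSemidef ((hB k).smul (Complex.zero_le_real.2 hc))
  have hmean : 1 + (c : ℂ) • ((Fintype.card ι : ℝ)⁻¹ • ∑ k, B k) =
      ∑ k, (Fintype.card ι : ℝ)⁻¹ • (1 + (c : ℂ) • B k) := by
    simp only [smul_add, sum_add_distrib, ← sum_smul, hw, one_smul, smul_sum,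
      smul_comm (Fintype.card ι : ℝ)⁻¹ (c : ℂ)]
  rw [hmean, mul_sum]
  exact h

theorem det_re_conjTranspose_mul_diagonal_mul_le_prod {m n : ℕ} (hmn : m ≤ n)
    {W : Matrix (Fin n) (Fin m) ℂ} (hW : Wᴴ * W = 1) {e : Fin n → ℝ} (he0 : 0 ≤ e)
    (he : Antitone e) :
    (Wᴴ * diagonal (fun j => (e j : ℂ)) * W).det.re ≤ ∏ i : Fin m, e (Fin.castLE hmn i) :=
  Complex.ofReal_re (∏ i : Fin m, e (Fin.castLE hmn i)) ▸ (Complex.le_def.1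
    (det_conjTranspose_mul_diagonal_mul_le_s7 hW fun s hs =>
      s.prod_le_prod_castLE_of_antitone hmn he0 he (by simpa using hs))).1

theorem log_det_re_one_add_smul_compression_le {m n : ℕ} (hmn : m ≤ n)
    {V : Matrix (Fin n) (Fin m) ℂ} (hV : Vᴴ * V = 1) {U : Matrix (Fin n) (Fin n) ℂ}
    (hU : Uᴴ * U = 1) {c : ℝ} (hc : 0 ≤ c) {μ : Fin n → ℝ} (hμ0 : 0 ≤ μ) (hμ : Antitone μ) :
    Real.log (1 + (c : ℂ) • (Vᴴ * (U * diagonal (fun i => (μ i : ℂ)) * Uᴴ) * V)).det.re ≤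
      ∑ i : Fin m, Real.log (1 + c * μ (Fin.castLE hmn i)) := by
  set W := Uᴴ * V
  have hW : Wᴴ * W = 1 := by
    rw [conjTranspose_mul, conjTranspose_conjTranspose, Matrix.mul_assoc, ← Matrix.mul_assoc U,
      mul_eq_one_comm.mp hU, Matrix.one_mul, hV]
  have hpd : (1 + (c : ℂ) • (Vᴴ * (U * diagonal (fun i => (μ i : ℂ)) * Uᴴ) * V)).PosDef := by
    refine PosDef.one.add_posSemidef (PosSemidef.smul ?_ (Complex.zero_le_real.2 hc))
    refine (PosSemidef.mul_mul_conjTranspose_same ?_ U).conjTranspose_mul_mul_same V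
    exact posSemidef_diagonal_iff.2 fun i => Complex.zero_le_real.2 (hμ0 i)
  have hconj : 1 + (c : ℂ) • (Vᴴ * (U * diagonal (fun i => (μ i : ℂ)) * Uᴴ) * V) =
      Wᴴ * diagonal (fun j => ((1 + c * μ j : ℝ) : ℂ)) * W := by
    have hdiag : diagonal (fun j => ((1 + c * μ j : ℝ) : ℂ)) =
        1 + (c : ℂ) • diagonal (fun i => (μ i : ℂ)) := by
      ext i j
      rcases eq_or_ne i j with rfl | hij <;> simp [*]
    rw [hdiag, Matrix.mul_add, Matrix.add_mul, Matrix.mul_one, hW, Matrix.mul_smul,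
      Matrix.smul_mul]
    simp only [W, conjTranspose_mul, conjTranspose_conjTranspose, Matrix.mul_assoc]
  have hpos : ∀ j, 0 < 1 + c * μ j := fun j =>
    add_pos_of_pos_of_nonneg one_pos (mul_nonneg hc (hμ0 j))
  rw [← Real.log_prod fun i _ => (hpos _).ne']
  refine Real.log_le_log hpd.det_re_pos ?_
  rw [hconj]
  exact det_re_conjTranspose_mul_diagonal_mul_le_prod hmn hW (fun j => (hpos j).le)
    fun i j hij => add_le_add_right (mul_le_mul_of_nonneg_left (hμ hij) hc) 1

end Matrix

/-- Let `H_1, …, H_K ∈ ℂ^{p×n}` be arbitrary, let `V ∈ ℂ^{n×m}` (`m ≤ n`)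
satisfy `VᴴV = I`, let `c ≥ 0`, and let `H_e = (1/K) ∑_k H_kᴴH_k` with eigenvalues
`λ_1(H_e) ≥ … ≥ λ_n(H_e)` (pinned down by a unitary spectral decomposition together with
antitonicity). Then
`(1/K) ∑_k log₂ det(I + c VᴴH_kᴴH_kV) ≤ ∑_{i=1}^m log₂(1 + c λ_i(H_e))`. -/
theorem stmt_7 {p n m K : ℕ} (hK : 0 < K) (hmn : m ≤ n)
    (H : Fin K → Matrix (Fin p) (Fin n) ℂ)
    (V : Matrix (Fin n) (Fin m) ℂ) (hV : Vᴴ * V = 1)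
    (c : ℝ) (hc : 0 ≤ c)
    (He : Matrix (Fin n) (Fin n) ℂ)
    (hHe : He = ((1 / K : ℝ) : ℂ) • ∑ k : Fin K, (H k)ᴴ * H k)
    (μ : Fin n → ℝ) (hμ : Antitone μ)
    (U : Matrix (Fin n) (Fin n) ℂ) (hU : Uᴴ * U = 1)
    (hdec : He = U * Matrix.diagonal (fun i => (μ i : ℂ)) * Uᴴ) :
    (1 / K : ℝ) *
        ∑ k : Fin K,
          Real.logb 2 ((1 + (c : ℂ) • (Vᴴ * ((H k)ᴴ * H k) * V)).det).re
      ≤ ∑ i : Fin m, Real.logb 2 (1 + c * μ (Fin.castLE hmn i)) := by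
  have : Nonempty (Fin K) := ⟨⟨0, hK⟩⟩
  have hHe_psd : He.PosSemidef := hHe ▸ (posSemidef_sum univ fun k _ =>
    posSemidef_conjTranspose_mul_self (H k)).smul (by positivity)
  have hB : ∀ k, (Vᴴ * ((H k)ᴴ * H k) * V).PosSemidef := fun k => by
    simpa [conjTranspose_mul, Matrix.mul_assoc] using posSemidef_conjTranspose_mul_self (H k * V)
  have hmean : (K : ℝ)⁻¹ • ∑ k, Vᴴ * ((H k)ᴴ * H k) * V = Vᴴ * He * V := by
    simp only [hHe, one_div, Matrix.mul_smul, Matrix.smul_mul, Matrix.mul_sum, Matrix.sum_mul,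
      Complex.coe_smul]
  have hjensen := mean_log_det_re_one_add_smul_le hc hB
  rw [Fintype.card_fin, hmean, hdec] at hjensen
  have hbound := log_det_re_one_add_smul_compression_le hmn hV hU hc
    (nonneg_of_eq_mul_diagonal_mul_conjTranspose hHe_psd hU hdec) hμ
  simp only [Real.logb, ← sum_div, ← mul_div_assoc, one_div]
  gcongr
  exact hjensen.trans hbound
end

section
/- Let M ∈ ℂ^{r×r} be Hermitian positive semidefinite and let P ∈ ℂ^{r×r} be an orthogonal projection, i.e. Pᴴ = P and P² = P. Then det(I_r + P·M·P) ≤ det(I_r + M), where both determinants are positive real numbers. -/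
/-!
With `B = √M`, Sylvester's identity `det (1 + XY) = det (1 + YX)` turns `det (1 + PMP)` into
`det (1 + BPB)`. Since `P ≤ 1`, conjugating by `B` gives `BPB ≤ BB = M` in the Loewner order,
and the determinant is monotone on positive definite matrices: if `0 < X ≤ Y` then
`R⁻¹ Y R⁻¹ ≥ 1` for `R = √X`, so its eigenvalues are at least `1` and
`det Y = det X · det (R⁻¹ Y R⁻¹) ≥ det X`.
-/

open Matrix ComplexOrder
open scoped MatrixOrder

namespace Matrix

variable {n 𝕜 : Type*} [Fintype n] [DecidableEq n] [RCLike 𝕜]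

theorem one_le_det_of_one_le {A : Matrix n n 𝕜} (hA : 1 ≤ A) : 1 ≤ A.det := by
  have hAH : A.IsHermitian := by
    simpa using (le_iff.mp hA).isHermitian.add isHermitian_one
  have h_eig (i : n) : 1 ≤ hAH.eigenvalues i := by
    have h1 : algebraMap ℝ (Matrix n n 𝕜) 1 ≤ A := by simpa using hA
    exact (algebraMap_le_iff_le_spectrum hAH.isSelfAdjoint).mp h1 _
      (hAH.eigenvalues_mem_spectrum_real i)
  rw [hAH.det_eq_prod_eigenvalues, ← RCLike.ofReal_prod]
  exact_mod_cast Finset.one_le_prod fun i _ ↦ h_eig i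

theorem PosDef.det_le_det_of_le {X Y : Matrix n n 𝕜} (hX : X.PosDef) (hXY : X ≤ Y) :
    X.det ≤ Y.det := by
  set R := CFC.sqrt X
  have hRR : R * R = X := CFC.sqrt_mul_sqrt_self X (nonneg_iff_posSemidef.mpr hX.posSemidef)
  have hR : IsUnit R.det :=
    isUnit_iff_isUnit_det R |>.mp (isStrictlyPositive_iff_posDef.mpr hX).isUnit_cfcSqrt
  have hRinv : IsSelfAdjoint R⁻¹ := by
    rw [IsSelfAdjoint, star_eq_conjTranspose, conjTranspose_nonsing_inv,
      ← star_eq_conjTranspose, (CFC.sqrt_nonneg X).isSelfAdjoint.star_eq]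
  have h_one_le : 1 ≤ R⁻¹ * Y * R⁻¹ := by
    calc (1 : Matrix n n 𝕜) = R⁻¹ * X * R⁻¹ := by
          rw [← hRR, mul_assoc, mul_nonsing_inv_cancel_right _ _ hR, nonsing_inv_mul _ hR]
      _ ≤ _ := hRinv.conjugate_le_conjugate hXY
  calc X.det = X.det * 1 := (mul_one _).symm
    _ ≤ X.det * (R⁻¹ * Y * R⁻¹).det :=
        mul_le_mul_of_nonneg_left (one_le_det_of_one_le h_one_le) hX.det_pos.le
    _ = (R * (R⁻¹ * Y * R⁻¹) * R).det := by
        rw [← hRR, det_mul R R, det_mul (R * _) R, det_mul R (R⁻¹ * Y * R⁻¹)]; ring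
    _ = Y.det := by
        simp only [mul_assoc, nonsing_inv_mul _ hR, mul_one, mul_nonsing_inv_cancel_left _ _ hR]

theorem det_one_add_conj_le_of_isStarProjection {M P : Matrix n n 𝕜} (hM : M.PosSemidef)
    (hP : IsStarProjection P) : (1 + P * M * P).det ≤ (1 + M).det := by
  set B := CFC.sqrt M
  have hBB : B * B = M := CFC.sqrt_mul_sqrt_self M (nonneg_iff_posSemidef.mpr hM)
  have hB : IsSelfAdjoint B := (CFC.sqrt_nonneg M).isSelfAdjoint
  have h_sylvester : (1 + P * M * P).det = (1 + B * P * B).det := by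
    rw [← hBB, show P * (B * B) * P = (P * B) * (B * P) by simp only [mul_assoc],
      det_one_add_mul_comm, show B * P * (P * B) = B * (P * P) * B by simp only [mul_assoc],
      hP.isIdempotentElem.eq]
  have h_le : 1 + B * P * B ≤ 1 + M := by
    have hP_le_one : P ≤ 1 := sub_nonneg.mp hP.one_sub.nonneg
    simpa [hBB] using add_le_add_left (hB.conjugate_le_conjugate hP_le_one) 1
  have h_posDef : (1 + B * P * B).PosDef :=
    PosDef.one.add_posSemidef (nonneg_iff_posSemidef.mp (hB.conjugate_nonneg hP.nonneg))
  exact h_sylvester ▸ h_posDef.det_le_det_of_le h_le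

end Matrix

/-- Let `M ∈ ℂ^{r×r}` be Hermitian positive semidefinite and let `P ∈ ℂ^{r×r}`
be an orthogonal projection (`Pᴴ = P`, `P² = P`). Then `det(I + P M P) ≤ det(I + M)`,
both determinants being positive real numbers. -/
theorem stmt_9 {r : ℕ}
    (M : Matrix (Fin r) (Fin r) ℂ) (hM : M.PosSemidef)
    (P : Matrix (Fin r) (Fin r) ℂ) (hP : Pᴴ = P) (hP2 : P * P = P) :
    ((1 + P * M * P).det).im = 0 ∧ 0 < ((1 + P * M * P).det).re ∧
    ((1 + M).det).im = 0 ∧ 0 < ((1 + M).det).re ∧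
    ((1 + P * M * P).det).re ≤ ((1 + M).det).re := by
  have hPMP : (P * M * P).PosSemidef := by
    simpa only [hP] using hM.conjTranspose_mul_mul_same P
  obtain ⟨hPMP_re, hPMP_im⟩ := Complex.lt_def.mp (PosDef.one.add_posSemidef hPMP).det_pos
  obtain ⟨hM_re, hM_im⟩ := Complex.lt_def.mp (PosDef.one.add_posSemidef hM).det_pos
  have h_le := (Complex.le_def.mp (det_one_add_conj_le_of_isStarProjection hM ⟨hP2, hP⟩)).1
  exact ⟨hPMP_im.symm, hPMP_re, hM_im.symm, hM_re, h_le⟩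
end
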